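/- Let m, n ≥ 1, let (p,q) ∈ 𝒞_{m,n}, let ε > 0, and let 1 ≤ j ≤ k ≤ min(m,n). If θ_k(p,q) < ε, then there exists a subspace W of V_j with dim W = k − j + 1 such that ‖S_j(p,q)(w,v)‖ < ε·√(max(m,n) − j + 1)·‖(w,v)‖ for every nonzero (w,v) ∈ W. In particular, there exists a unit vector (w,v) ∈ V_j with ‖S_j(p,q)(w,v)‖ < ε·√(max(m,n) − j + 1), i.e., the i-th smallest singular values of S_j(p,q) for i = 1,…,k−j+1 are all below ε·√(max(m,n) − j + 1). -/

import Mathlib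

open Polynomial

/-- The squared ℓ²-norm of the coefficient sequence of a polynomial. -/
noncomputable def pnormSq (p : ℂ[X]) : ℝ := ∑ i ∈ p.support, ‖p.coeff i‖ ^ 2

/-- The ℓ²-norm of the coefficient sequence of a polynomial. -/
noncomputable def pnorm (p : ℂ[X]) : ℝ := Real.sqrt (pnormSq p)

/-- The ℓ²-norm of a pair of polynomials. -/
noncomputable def pairNorm (p q : ℂ[X]) : ℝ := Real.sqrt (pnormSq p + pnormSq q)

/-- The ℓ²-norm of a triple of polynomials. -/
noncomputable def tripleNorm (p q r : ℂ[X]) : ℝ :=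
  Real.sqrt (pnormSq p + pnormSq q + pnormSq r)

/-- The degree of the greatest common divisor of two polynomials. -/
noncomputable def gcdDeg (p q : ℂ[X]) : ℕ := (EuclideanDomain.gcd p q).natDegree

/-- The set 𝒞_{m,n} of pairs of polynomials of degrees exactly m and n. -/
def Cmn (m n : ℕ) : Set (ℂ[X] × ℂ[X]) :=
  {pq | pq.1.degree = (m : WithBot ℕ) ∧ pq.2.degree = (n : WithBot ℕ)}

/-- The GCD manifold 𝒫ᵏ_{m,n} : pairs in 𝒞_{m,n} whose GCD has degree k. -/
def Pmnk (m n k : ℕ) : Set (ℂ[X] × ℂ[X]) :=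
  {pq | pq ∈ Cmn m n ∧ gcdDeg pq.1 pq.2 = k}

/-- The distance θ_k(p,q) from (p,q) to the GCD manifold 𝒫ᵏ_{m,n}. -/
noncomputable def theta (m n k : ℕ) (p q : ℂ[X]) : ℝ :=
  sInf ((fun rs => pairNorm (p - rs.1) (q - rs.2)) '' Pmnk m n k)

/-- The bilinear Sylvester expression (w,v) ↦ p·w − q·v as a linear map. -/
noncomputable def sylMap (p q : ℂ[X]) : ℂ[X] × ℂ[X] →ₗ[ℂ] ℂ[X] :=
  (LinearMap.mulLeft ℂ p).comp (LinearMap.fst ℂ ℂ[X] ℂ[X]) -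
    (LinearMap.mulLeft ℂ q).comp (LinearMap.snd ℂ ℂ[X] ℂ[X])

/-- The domain V_j = {(w,v) : deg w ≤ n−j, deg v ≤ m−j} of the j-th Sylvester map. -/
noncomputable def Vspace (m n j : ℕ) : Submodule ℂ (ℂ[X] × ℂ[X]) :=
  (Polynomial.degreeLE ℂ ((n - j : ℕ) : WithBot ℕ)).prod
    (Polynomial.degreeLE ℂ ((m - j : ℕ) : WithBot ℕ))

/-! ### Auxiliary lemmas -/

open Finset

lemma pnormSq_nonneg (p : ℂ[X]) : 0 ≤ pnormSq p :=
  Finset.sum_nonneg fun _ _ => sq_nonneg _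

lemma pnorm_nonneg (p : ℂ[X]) : 0 ≤ pnorm p := Real.sqrt_nonneg _

lemma pnormSq_eq_sum_range (p : ℂ[X]) {M : ℕ} (h : p.natDegree < M) :
    pnormSq p = ∑ i ∈ range M, ‖p.coeff i‖ ^ 2 := by
  refine Finset.sum_subset (Polynomial.supp_subset_range h) ?_
  intro i _ hi
  simp [Polynomial.notMem_support_iff.mp hi]

noncomputable def coeL (N : ℕ) : ℂ[X] →ₗ[ℂ] EuclideanSpace ℂ (Fin N) where
  toFun p := WithLp.toLp 2 (fun i => p.coeff i)
  map_add' p q := by ext i; simp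
  map_smul' c p := by ext i; simp

lemma pnormSq_eq_normSq {N : ℕ} (p : ℂ[X]) (h : p.natDegree < N) :
    pnormSq p = ‖coeL N p‖ ^ 2 := by
  rw [EuclideanSpace.norm_eq, Real.sq_sqrt (Finset.sum_nonneg fun _ _ => sq_nonneg _),
    pnormSq_eq_sum_range p h, ← Fin.sum_univ_eq_sum_range]
  rfl

lemma pnorm_eq_norm {N : ℕ} (p : ℂ[X]) (h : p.natDegree < N) :
    pnorm p = ‖coeL N p‖ := by
  rw [pnorm, pnormSq_eq_normSq p h, Real.sqrt_sq (norm_nonneg _)]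

lemma pnormSq_pos {p : ℂ[X]} (hp : p ≠ 0) : 0 < pnormSq p := by
  have h : p.natDegree ∈ p.support := Polynomial.natDegree_mem_support_of_nonzero hp
  refine Finset.sum_pos' (fun _ _ => sq_nonneg _) ⟨p.natDegree, h, ?_⟩
  have h2 := Polynomial.mem_support_iff.mp h
  have : 0 < ‖p.coeff p.natDegree‖ := norm_pos_iff.mpr h2
  positivity

lemma pnorm_pos {p : ℂ[X]} (hp : p ≠ 0) : 0 < pnorm p := Real.sqrt_pos.mpr (pnormSq_pos hp)

lemma pairNorm_nonneg (p q : ℂ[X]) : 0 ≤ pairNorm p q := Real.sqrt_nonneg _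

lemma pairNorm_pos {p : ℂ[X]} (hp : p ≠ 0) (q : ℂ[X]) : 0 < pairNorm p q :=
  Real.sqrt_pos.mpr (add_pos_of_pos_of_nonneg (pnormSq_pos hp) (pnormSq_nonneg q))

lemma pnormSq_X_pow_mul (f : ℂ[X]) (b : ℕ) : pnormSq (X ^ b * f) = pnormSq f := by
  have hd : (X ^ b * f).natDegree < f.natDegree + 1 + b := by
    calc (X ^ b * f).natDegree ≤ b + f.natDegree := natDegree_mul_le.trans (by simp)
    _ < f.natDegree + 1 + b := by omega
  rw [pnormSq_eq_sum_range (X^b*f) hd, pnormSq_eq_sum_range f (Nat.lt_succ_self _)]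
  rw [mul_comm (X^b) f]
  have : ∀ i ∈ range (f.natDegree + 1 + b), ‖(f * X ^ b).coeff i‖ ^ 2
      = if b ≤ i then ‖f.coeff (i - b)‖^2 else 0 := by
    intro i _
    rw [Polynomial.coeff_mul_X_pow']
    split <;> simp
  rw [Finset.sum_congr rfl this, Finset.sum_ite, Finset.sum_const_zero, add_zero]
  have hfilter : Finset.filter (fun i => b ≤ i) (range (f.natDegree + 1 + b))
      = Finset.Ico b (f.natDegree + 1 + b) := by
    ext i; simp [Finset.mem_filter, Finset.mem_Ico, and_comm]
  rw [hfilter, Finset.sum_Ico_eq_sum_range]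
  simp

lemma pnorm_X_pow_mul (f : ℂ[X]) (b : ℕ) : pnorm (X ^ b * f) = pnorm f := by
  rw [pnorm, pnorm, pnormSq_X_pow_mul]

lemma pnorm_smul (z : ℂ) (f : ℂ[X]) : pnorm (z • f) = ‖z‖ * pnorm f := by
  have h1 : (z • f).natDegree < f.natDegree + 1 :=
    Nat.lt_succ_of_le (Polynomial.natDegree_smul_le z f)
  rw [pnorm_eq_norm (z • f) h1, pnorm_eq_norm f (Nat.lt_succ_self _), map_smul, norm_smul]

lemma pnormSq_smul (z : ℂ) (f : ℂ[X]) : pnormSq (z • f) = ‖z‖^2 * pnormSq f := by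
  have h1 : pnormSq (z • f) = pnorm (z • f) ^ 2 := (Real.sq_sqrt (pnormSq_nonneg _)).symm
  rw [h1, pnorm_smul, mul_pow, pnorm, Real.sq_sqrt (pnormSq_nonneg f)]

lemma pnorm_sub_le (a b : ℂ[X]) : pnorm (a - b) ≤ pnorm a + pnorm b := by
  set N := max a.natDegree b.natDegree + 1 with hN
  have ha : a.natDegree < N := by omega
  have hb : b.natDegree < N := by omega
  have hab : (a - b).natDegree < N := Nat.lt_succ_of_le (Polynomial.natDegree_sub_le a b)
  rw [pnorm_eq_norm _ hab, pnorm_eq_norm _ ha, pnorm_eq_norm _ hb, map_sub]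
  exact norm_sub_le _ _

lemma l1_le (w : ℂ[X]) (B : ℕ) (hw : w.natDegree < B) :
    ∑ b ∈ range B, ‖w.coeff b‖ ≤ Real.sqrt B * pnorm w := by
  have h := Finset.sum_mul_sq_le_sq_mul_sq (range B) (fun _ => (1:ℝ)) (fun b => ‖w.coeff b‖)
  simp only [one_mul, one_pow, Finset.sum_const, Finset.card_range, nsmul_eq_mul, mul_one] at h
  have h2 : (∑ b ∈ range B, ‖w.coeff b‖) ^ 2 ≤ B * pnormSq w := by
    rw [pnormSq_eq_sum_range w hw]; exact h
  have hnn : 0 ≤ ∑ b ∈ range B, ‖w.coeff b‖ := Finset.sum_nonneg fun _ _ => norm_nonneg _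
  calc ∑ b ∈ range B, ‖w.coeff b‖
      = Real.sqrt ((∑ b ∈ range B, ‖w.coeff b‖)^2) := (Real.sqrt_sq hnn).symm
  _ ≤ Real.sqrt (B * pnormSq w) := Real.sqrt_le_sqrt h2
  _ = Real.sqrt B * pnorm w := by rw [Real.sqrt_mul (Nat.cast_nonneg _)]; rfl

lemma young (f w : ℂ[X]) (B : ℕ) (hw : w.natDegree < B) :
    pnorm (f * w) ≤ Real.sqrt B * pnorm f * pnorm w := by
  set N := f.natDegree + B with hN
  have hfw : (f * w).natDegree < N := by
    calc (f*w).natDegree ≤ f.natDegree + w.natDegree := natDegree_mul_le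
    _ < N := by omega
  have hexp : f * w = ∑ b ∈ range B, (w.coeff b) • (X ^ b * f) := by
    conv_lhs => rw [Polynomial.as_sum_range' w B hw]
    rw [Finset.mul_sum]
    refine Finset.sum_congr rfl fun b _ => ?_
    rw [← Polynomial.smul_X_eq_monomial, mul_smul_comm, mul_comm f (X^b)]
  have hstep : ‖coeL N (f * w)‖ ≤ ∑ b ∈ range B, ‖w.coeff b‖ * pnorm (X ^ b * f) := by
    rw [hexp, map_sum]
    refine (norm_sum_le _ _).trans (Finset.sum_le_sum fun b hb => ?_)
    rw [map_smul, norm_smul]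
    have hX : (X ^ b * f).natDegree < N := by
      rcases eq_or_ne f 0 with rfl|hf
      · simp [hN]; omega
      · rw [Polynomial.natDegree_mul (pow_ne_zero b Polynomial.X_ne_zero) hf,
          Polynomial.natDegree_X_pow]
        have : b < B := Finset.mem_range.mp hb
        omega
    rw [pnorm_eq_norm _ hX]
  rw [pnorm_eq_norm _ hfw]
  calc ‖coeL N (f*w)‖ ≤ ∑ b ∈ range B, ‖w.coeff b‖ * pnorm (X ^ b * f) := hstep
  _ = (∑ b ∈ range B, ‖w.coeff b‖) * pnorm f := by
      rw [Finset.sum_mul]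
      exact Finset.sum_congr rfl fun b _ => by rw [pnorm_X_pow_mul]
  _ ≤ (Real.sqrt B * pnorm w) * pnorm f :=
      mul_le_mul_of_nonneg_right (l1_le w B hw) (pnorm_nonneg f)
  _ = Real.sqrt B * pnorm f * pnorm w := by ring

lemma cs2 (a b x y : ℝ) (ha : 0 ≤ a) (hb : 0 ≤ b) (hx : 0 ≤ x) (hy : 0 ≤ y) :
    a * x + b * y ≤ Real.sqrt (a^2 + b^2) * Real.sqrt (x^2 + y^2) := by
  have h5 : (a*x+b*y)^2 ≤ (a^2+b^2)*(x^2+y^2) := by nlinarith [sq_nonneg (a*y-b*x)]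
  calc a*x+b*y = Real.sqrt ((a*x+b*y)^2) := (Real.sqrt_sq (by positivity)).symm
  _ ≤ Real.sqrt ((a^2+b^2)*(x^2+y^2)) := Real.sqrt_le_sqrt h5
  _ = Real.sqrt (a^2+b^2) * Real.sqrt (x^2+y^2) := Real.sqrt_mul (by positivity) _

lemma key_bound (m n j : ℕ) (hjn : j ≤ n) (hjm : j ≤ m) (f₁ f₂ w v : ℂ[X])
    (hw : w.natDegree ≤ n - j) (hv : v.natDegree ≤ m - j) :
    pnorm (f₁ * w - f₂ * v) ≤
      Real.sqrt ((max m n - j + 1 : ℕ)) * (pairNorm f₁ f₂ * pairNorm w v) := by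
  have h1 : pnorm (f₁*w - f₂*v) ≤ pnorm (f₁*w) + pnorm (f₂*v) := pnorm_sub_le _ _
  have h2 := young f₁ w (n-j+1) (by omega)
  have h3 := young f₂ v (m-j+1) (by omega)
  have hCn : Real.sqrt ((n-j+1 : ℕ)) ≤ Real.sqrt ((max m n - j + 1 : ℕ)) :=
    Real.sqrt_le_sqrt (by exact_mod_cast (by omega : n-j+1 ≤ max m n - j + 1))
  have hCm : Real.sqrt ((m-j+1 : ℕ)) ≤ Real.sqrt ((max m n - j + 1 : ℕ)) :=
    Real.sqrt_le_sqrt (by exact_mod_cast (by omega : m-j+1 ≤ max m n - j + 1))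
  have hp : ∀ x : ℂ[X], pnorm x ^ 2 = pnormSq x := fun x => Real.sq_sqrt (pnormSq_nonneg x)
  have hcs := cs2 (pnorm f₁) (pnorm f₂) (pnorm w) (pnorm v)
    (pnorm_nonneg _) (pnorm_nonneg _) (pnorm_nonneg _) (pnorm_nonneg _)
  rw [hp f₁, hp f₂, hp w, hp v] at hcs
  calc pnorm (f₁*w - f₂*v) ≤ pnorm (f₁*w) + pnorm (f₂*v) := h1
  _ ≤ Real.sqrt ((n-j+1 : ℕ)) * pnorm f₁ * pnorm w
      + Real.sqrt ((m-j+1 : ℕ)) * pnorm f₂ * pnorm v := add_le_add h2 h3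
  _ ≤ Real.sqrt ((max m n - j + 1 : ℕ)) * pnorm f₁ * pnorm w
      + Real.sqrt ((max m n - j + 1 : ℕ)) * pnorm f₂ * pnorm v := by
      have e1 : Real.sqrt ((n-j+1 : ℕ)) * pnorm f₁ * pnorm w
          ≤ Real.sqrt ((max m n - j + 1 : ℕ)) * pnorm f₁ * pnorm w := by
        apply mul_le_mul_of_nonneg_right _ (pnorm_nonneg w)
        exact mul_le_mul_of_nonneg_right hCn (pnorm_nonneg f₁)
      have e2 : Real.sqrt ((m-j+1 : ℕ)) * pnorm f₂ * pnorm v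
          ≤ Real.sqrt ((max m n - j + 1 : ℕ)) * pnorm f₂ * pnorm v := by
        apply mul_le_mul_of_nonneg_right _ (pnorm_nonneg v)
        exact mul_le_mul_of_nonneg_right hCm (pnorm_nonneg f₂)
      exact add_le_add e1 e2
  _ = Real.sqrt ((max m n - j + 1 : ℕ)) * (pnorm f₁ * pnorm w + pnorm f₂ * pnorm v) := by ring
  _ ≤ Real.sqrt ((max m n - j + 1 : ℕ)) * (pairNorm f₁ f₂ * pairNorm w v) := by
      exact mul_le_mul_of_nonneg_left hcs (Real.sqrt_nonneg _)

lemma wb_le_iff (a : WithBot ℕ) (d : ℕ) :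
    a ≤ (d : ℕ) ↔ a < ((d+1 : ℕ) : WithBot ℕ) := by
  cases a with
  | bot => simpa using WithBot.bot_lt_coe (d+1)
  | coe x =>
    rw [Nat.cast_withBot, Nat.cast_withBot, WithBot.coe_le_coe, WithBot.coe_lt_coe]
    omega

lemma degreeLE_eq_degreeLT (d : ℕ) :
    Polynomial.degreeLE ℂ (d : ℕ) = Polynomial.degreeLT ℂ (d+1) := by
  ext f
  rw [Polynomial.mem_degreeLE, Polynomial.mem_degreeLT, wb_le_iff]

lemma finrank_degreeLE (d : ℕ) :
    Module.finrank ℂ (Polynomial.degreeLE ℂ (d : ℕ)) = d + 1 := by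
  rw [degreeLE_eq_degreeLT, (Polynomial.degreeLTEquiv ℂ (d+1)).finrank_eq]
  exact Module.finrank_fin_fun ℂ

lemma pmnk_nonempty_aux (m n k : ℕ) (hkm : k ≤ m) (hkn : k ≤ n) :
    ∃ r s : ℂ[X], r.degree = (m : WithBot ℕ) ∧ s.degree = (n : WithBot ℕ) ∧
      (EuclideanDomain.gcd r s).natDegree = k := by
  set A : ℂ[X] := (X + C 1)^(m-k) with hA
  set B : ℂ[X] := (X + C 2)^(n-k) with hB
  have hmA : A.Monic := (Polynomial.monic_X_add_C (1:ℂ)).pow _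
  have hmB : B.Monic := (Polynomial.monic_X_add_C (2:ℂ)).pow _
  refine ⟨X^k * A, X^k * B, ?_, ?_, ?_⟩
  · have h := Polynomial.natDegree_mul (pow_ne_zero k Polynomial.X_ne_zero) hmA.ne_zero
    rw [Polynomial.degree_eq_natDegree
        (mul_ne_zero (pow_ne_zero k Polynomial.X_ne_zero) hmA.ne_zero), h,
      Polynomial.natDegree_X_pow, hA, Polynomial.natDegree_pow, Polynomial.natDegree_X_add_C]
    congr 1; omega
  · have h := Polynomial.natDegree_mul (pow_ne_zero k Polynomial.X_ne_zero) hmB.ne_zero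
    rw [Polynomial.degree_eq_natDegree
        (mul_ne_zero (pow_ne_zero k Polynomial.X_ne_zero) hmB.ne_zero), h,
      Polynomial.natDegree_X_pow, hB, Polynomial.natDegree_pow, Polynomial.natDegree_X_add_C]
    congr 1; omega
  · set d := EuclideanDomain.gcd (X^k * A) (X^k * B) with hd
    have hC : (C (2:ℂ) : ℂ[X]) - C 1 = 1 := by rw [← Polynomial.C_sub]; norm_num
    have base : IsCoprime (X + C (1:ℂ)) (X + C 2) := ⟨-1, 1, by linear_combination hC⟩
    obtain ⟨u, v, huv⟩ : IsCoprime A B := base.pow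
    have hXd : X^k ∣ d := EuclideanDomain.dvd_gcd (Dvd.intro A rfl) (Dvd.intro B rfl)
    have hdX : d ∣ X^k := by
      have h1 : d ∣ u * (X^k * A) + v * (X^k * B) :=
        dvd_add ((EuclideanDomain.gcd_dvd_left _ _).mul_left u)
          ((EuclideanDomain.gcd_dvd_right _ _).mul_left v)
      have h2 : u * (X^k * A) + v * (X^k * B) = X^k := by
        calc u * (X^k * A) + v * (X^k * B) = X^k * (u * A + v * B) := by ring
        _ = X^k := by rw [huv, mul_one]
      rwa [h2] at h1
    have hdne : d ≠ 0 := by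
      intro h0
      rw [h0] at hdX
      exact pow_ne_zero k Polynomial.X_ne_zero (zero_dvd_iff.mp hdX)
    have h1 : d.natDegree ≤ k := by
      have := Polynomial.natDegree_le_of_dvd hdX (pow_ne_zero k Polynomial.X_ne_zero)
      rwa [Polynomial.natDegree_X_pow] at this
    have h2 : k ≤ d.natDegree := by
      have := Polynomial.natDegree_le_of_dvd hXd hdne
      rwa [Polynomial.natDegree_X_pow] at this
    omega

/-- If θ_k(p,q) < ε, then the j-th Sylvester map has k−j+1 singular values below
ε·√(max(m,n)−j+1): there is a (k−j+1)-dimensional subspace of V_j on which the map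
is small, and in particular a unit vector with small image. -/
theorem small_singular_values (m n k j : ℕ) (hm : 1 ≤ m) (hn : 1 ≤ n)
    (hj1 : 1 ≤ j) (hjk : j ≤ k) (hk : k ≤ min m n)
    (p q : ℂ[X]) (hpq : (p, q) ∈ Cmn m n)
    (ε : ℝ) (hε : 0 < ε) (hθ : theta m n k p q < ε) :
    (∃ W : Submodule ℂ (ℂ[X] × ℂ[X]), W ≤ Vspace m n j ∧
      Module.finrank ℂ ↥W = k - j + 1 ∧
      ∀ wv ∈ W, wv ≠ (0 : ℂ[X] × ℂ[X]) →
        pnorm (p * wv.1 - q * wv.2) <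
          ε * Real.sqrt ((max m n - j + 1 : ℕ)) * pairNorm wv.1 wv.2) ∧
    (∃ wv : ℂ[X] × ℂ[X], wv ∈ Vspace m n j ∧ pairNorm wv.1 wv.2 = 1 ∧
      pnorm (p * wv.1 - q * wv.2) < ε * Real.sqrt ((max m n - j + 1 : ℕ))) := by
  have hkm : k ≤ m := le_trans hk (min_le_left _ _)
  have hkn : k ≤ n := le_trans hk (min_le_right _ _)
  -- extract a nearby pair (r,s) on the GCD manifold
  have hPne : (Pmnk m n k).Nonempty := by
    obtain ⟨r, s, h1, h2, h3⟩ := pmnk_nonempty_aux m n k hkm hkn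
    exact ⟨(r, s), ⟨⟨h1, h2⟩, h3⟩⟩
  have hSne : ((fun rs => pairNorm (p - rs.1) (q - rs.2)) '' Pmnk m n k).Nonempty :=
    hPne.image _
  obtain ⟨x, hxS, hxε⟩ := exists_lt_of_csInf_lt hSne hθ
  obtain ⟨rs, hrs, rfl⟩ := hxS
  obtain ⟨r, s⟩ := rs
  obtain ⟨⟨hrdeg, hsdeg⟩, hgdeg⟩ := hrs
  have hxε : pairNorm (p - r) (q - s) < ε := hxε
  set g := EuclideanDomain.gcd r s with hg
  have hrne : r ≠ 0 := fun h => by simp [h] at hrdeg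
  have hsne : s ≠ 0 := fun h => by simp [h] at hsdeg
  obtain ⟨r₁, hr₁⟩ := EuclideanDomain.gcd_dvd_left r s
  obtain ⟨s₁, hs₁⟩ := EuclideanDomain.gcd_dvd_right r s
  have hgne : g ≠ 0 := fun h => hrne (by rw [hr₁, ← hg, h, zero_mul])
  have hr₁ne : r₁ ≠ 0 := fun h => hrne (by rw [hr₁, h, mul_zero])
  have hs₁ne : s₁ ≠ 0 := fun h => hsne (by rw [hs₁, h, mul_zero])
  have hrnat : r.natDegree = m := Polynomial.natDegree_eq_of_degree_eq_some hrdeg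
  have hsnat : s.natDegree = n := Polynomial.natDegree_eq_of_degree_eq_some hsdeg
  have hgnat : g.natDegree = k := hgdeg
  have hr₁nat : r₁.natDegree = m - k := by
    have h := Polynomial.natDegree_mul hgne hr₁ne
    rw [← hr₁] at h
    omega
  have hs₁nat : s₁.natDegree = n - k := by
    have h := Polynomial.natDegree_mul hgne hs₁ne
    rw [← hs₁] at h
    omega
  set L : ℂ[X] →ₗ[ℂ] ℂ[X] × ℂ[X] :=
    LinearMap.prod (LinearMap.mulLeft ℂ s₁) (LinearMap.mulLeft ℂ r₁) with hL
  have hLapp : ∀ h : ℂ[X], L h = (s₁ * h, r₁ * h) := fun h => rfl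
  have hinj : Function.Injective L := by
    intro a b hab
    have h := congrArg Prod.fst hab
    simp only [hLapp] at h
    exact mul_left_cancel₀ hs₁ne h
  set U := Polynomial.degreeLE ℂ ((k - j : ℕ) : WithBot ℕ) with hU
  set W := U.map L with hW
  have hdegW : ∀ h : ℂ[X], h ∈ U →
      (s₁ * h).degree ≤ ((n - j : ℕ) : WithBot ℕ) ∧
      (r₁ * h).degree ≤ ((m - j : ℕ) : WithBot ℕ) := by
    intro h hh
    rw [hU, Polynomial.mem_degreeLE] at hh
    have hs₁deg : s₁.degree ≤ ((n - k : ℕ) : WithBot ℕ) := by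
      rw [Polynomial.degree_eq_natDegree hs₁ne, hs₁nat]
    have hr₁deg : r₁.degree ≤ ((m - k : ℕ) : WithBot ℕ) := by
      rw [Polynomial.degree_eq_natDegree hr₁ne, hr₁nat]
    constructor
    · calc (s₁*h).degree ≤ s₁.degree + h.degree := Polynomial.degree_mul_le _ _
      _ ≤ ((n-k : ℕ) : WithBot ℕ) + ((k-j : ℕ) : WithBot ℕ) := add_le_add hs₁deg hh
      _ = ((n-j:ℕ) : WithBot ℕ) := by rw [← Nat.cast_add]; congr 1; omega
    · calc (r₁*h).degree ≤ r₁.degree + h.degree := Polynomial.degree_mul_le _ _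
      _ ≤ ((m-k : ℕ) : WithBot ℕ) + ((k-j : ℕ) : WithBot ℕ) := add_le_add hr₁deg hh
      _ = ((m-j:ℕ) : WithBot ℕ) := by rw [← Nat.cast_add]; congr 1; omega
  have hWle : W ≤ Vspace m n j := by
    rintro wv ⟨h, hh, rfl⟩
    rw [Vspace, Submodule.mem_prod]
    obtain ⟨h1, h2⟩ := hdegW h hh
    exact ⟨Polynomial.mem_degreeLE.mpr h1, Polynomial.mem_degreeLE.mpr h2⟩
  have hrank : Module.finrank ℂ W = k - j + 1 := by
    rw [hW, ← (Submodule.equivMapOfInjective L hinj U).finrank_eq, hU, finrank_degreeLE]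
  have hCpos : 0 < Real.sqrt ((max m n - j + 1 : ℕ)) :=
    Real.sqrt_pos.mpr (by exact_mod_cast Nat.succ_pos _)
  have hbound : ∀ wv ∈ W, wv ≠ (0 : ℂ[X] × ℂ[X]) →
      pnorm (p * wv.1 - q * wv.2) <
        ε * Real.sqrt ((max m n - j + 1 : ℕ)) * pairNorm wv.1 wv.2 := by
    rintro wv ⟨h, hh, rfl⟩ hne0
    have hwv1 : (L h).1 = s₁ * h := rfl
    have hwv2 : (L h).2 = r₁ * h := rfl
    have hhne : h ≠ 0 := fun h0 => hne0 (by rw [h0, map_zero])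
    have hid : p * (L h).1 - q * (L h).2 = (p - r) * (s₁*h) - (q - s) * (r₁*h) := by
      rw [hwv1, hwv2]
      have hrel : r * (s₁ * h) = s * (r₁ * h) := by
        linear_combination (s₁ * h) * hr₁ - (r₁ * h) * hs₁
      linear_combination hrel
    obtain ⟨hd1, hd2⟩ := hdegW h hh
    have hw' : (s₁*h).natDegree ≤ n - j := Polynomial.natDegree_le_iff_degree_le.mpr hd1
    have hv' : (r₁*h).natDegree ≤ m - j := Polynomial.natDegree_le_iff_degree_le.mpr hd2
    have hkey := key_bound m n j (by omega) (by omega) (p-r) (q-s) (s₁*h) (r₁*h) hw' hv'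
    have hPpos : 0 < pairNorm (s₁*h) (r₁*h) := pairNorm_pos (mul_ne_zero hs₁ne hhne) _
    calc pnorm (p * (L h).1 - q * (L h).2)
        = pnorm ((p-r)*(s₁*h) - (q-s)*(r₁*h)) := by rw [hid]
    _ ≤ Real.sqrt ((max m n - j + 1 : ℕ)) * (pairNorm (p-r) (q-s) * pairNorm (s₁*h) (r₁*h)) :=
        hkey
    _ < Real.sqrt ((max m n - j + 1 : ℕ)) * (ε * pairNorm (s₁*h) (r₁*h)) := by
        exact mul_lt_mul_of_pos_left (mul_lt_mul_of_pos_right hxε hPpos) hCpos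
    _ = ε * Real.sqrt ((max m n - j + 1 : ℕ)) * pairNorm (L h).1 (L h).2 := by
        rw [hwv1, hwv2]; ring
  refine ⟨⟨W, hWle, hrank, hbound⟩, ?_⟩
  -- unit vector
  set c := pairNorm s₁ r₁ with hc
  have hcpos : 0 < c := pairNorm_pos hs₁ne r₁
  set z : ℂ := ((c⁻¹ : ℝ) : ℂ) with hz
  have hzne : z ≠ 0 := by
    rw [hz]
    exact_mod_cast inv_ne_zero hcpos.ne'
  set wv : ℂ[X] × ℂ[X] := (z • s₁, z • r₁) with hwv
  have hmem : wv ∈ W := by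
    refine ⟨z • 1, ?_, ?_⟩
    · simp only [SetLike.mem_coe, hU, Polynomial.mem_degreeLE]
      calc (z • (1:ℂ[X])).degree ≤ (1:ℂ[X]).degree := Polynomial.degree_smul_le _ _
      _ = (0:WithBot ℕ) := Polynomial.degree_one
      _ ≤ ((k-j : ℕ) : WithBot ℕ) := by
          exact_mod_cast (Nat.cast_le (α := WithBot ℕ)).mpr (Nat.zero_le (k-j))
    · rw [hLapp, hwv]
      simp [mul_smul_comm]
  have hnormz : ‖z‖ = c⁻¹ := by
    rw [hz, Complex.norm_real, Real.norm_eq_abs, abs_of_pos (inv_pos.mpr hcpos)]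
  have hunit : pairNorm wv.1 wv.2 = 1 := by
    show Real.sqrt (pnormSq (z • s₁) + pnormSq (z • r₁)) = 1
    rw [pnormSq_smul, pnormSq_smul, ← mul_add,
      Real.sqrt_mul (sq_nonneg ‖z‖), Real.sqrt_sq (norm_nonneg z), hnormz]
    have : Real.sqrt (pnormSq s₁ + pnormSq r₁) = c := rfl
    rw [this, inv_mul_cancel₀ hcpos.ne']
  have hne0 : wv ≠ 0 := by
    intro h0
    exact smul_ne_zero hzne hs₁ne (congrArg Prod.fst h0)
  have hfin := hbound wv hmem hne0
  rw [hunit, mul_one] at hfin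
  exact ⟨wv, hWle hmem, hunit, hfin⟩
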